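/- The matrix S₀⁻¹ + σ⁻² Σ_{t=1}^T φ_t φ_tᵀ is positive definite (so S_T and w̄_T are well defined), S_T is positive definite, and the pair (w̄_T, S_T) is the unique global maximizer of the variational objective L: for every w̄ ∈ ℝ^m and every positive-definite S ∈ ℝ^{m×m} with (w̄, S) ≠ (w̄_T, S_T), one has L(w̄, S) < L(w̄_T, S_T). In other words, the maximizer of the variational lower bound equals the posterior computed by recursive least squares (Theorem 1). -/

import Mathlib

open Matrix Real BigOperators

/-- Scalar Gaussian density `N(y; μ, s2)`. -/
noncomputable def gaussPdf1 (y μ s2 : ℝ) : ℝ :=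
  (2 * Real.pi * s2) ^ (-(1 : ℝ) / 2) * Real.exp (-(y - μ) ^ 2 / (2 * s2))

/-- Gaussian KL divergence between `N(μ₁, C₁)` and `N(μ₂, C₂)` (closed form). -/
noncomputable def gaussKL {m : ℕ} (μ₁ μ₂ : Fin m → ℝ)
    (C₁ C₂ : Matrix (Fin m) (Fin m) ℝ) : ℝ :=
  (1 / 2) * ((C₂⁻¹ * C₁).trace + (μ₂ - μ₁) ⬝ᵥ (C₂⁻¹ *ᵥ (μ₂ - μ₁)) - (m : ℝ)
      + Real.log C₂.det - Real.log C₁.det)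

/-- Posterior precision `S₀⁻¹ + σ⁻² ∑ₜ φₜ φₜᵀ`. -/
noncomputable def postPrec {m T : ℕ} (φ : Fin T → Fin m → ℝ) (σ2 : ℝ)
    (S0 : Matrix (Fin m) (Fin m) ℝ) : Matrix (Fin m) (Fin m) ℝ :=
  S0⁻¹ + σ2⁻¹ • ∑ t, vecMulVec (φ t) (φ t)

/-- Posterior covariance `S_T`. -/
noncomputable def postCov {m T : ℕ} (φ : Fin T → Fin m → ℝ) (σ2 : ℝ)
    (S0 : Matrix (Fin m) (Fin m) ℝ) : Matrix (Fin m) (Fin m) ℝ :=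
  (postPrec φ σ2 S0)⁻¹

/-- Posterior mean `wb_T`. -/
noncomputable def postMean {m T : ℕ} (φ : Fin T → Fin m → ℝ) (y : Fin T → ℝ) (σ2 : ℝ)
    (w0 : Fin m → ℝ) (S0 : Matrix (Fin m) (Fin m) ℝ) : Fin m → ℝ :=
  (postCov φ σ2 S0) *ᵥ (S0⁻¹ *ᵥ w0 + σ2⁻¹ • ∑ t, y t • φ t)

/-- Variational objective `L(wb, S)`. -/
noncomputable def Lobj {m T : ℕ} (φ : Fin T → Fin m → ℝ) (y : Fin T → ℝ) (σ2 : ℝ)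
    (w0 : Fin m → ℝ) (S0 : Matrix (Fin m) (Fin m) ℝ)
    (wb : Fin m → ℝ) (S : Matrix (Fin m) (Fin m) ℝ) : ℝ :=
  (∑ t, (Real.log (gaussPdf1 (y t) (wb ⬝ᵥ φ t) σ2)
      - (1 / 2) * σ2⁻¹ * (φ t ⬝ᵥ (S *ᵥ φ t))))
    - gaussKL wb w0 S S0

/-!
Completing the square in `w̄` and collecting the `S`-dependent terms gives, with `P = S_T⁻¹`,
`L(w̄, S) = c - ½ (w̄ - w̄_T)ᵀ P (w̄ - w̄_T) - ½ (tr (P S) - log det (P S))`.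
The quadratic term is maximal exactly at `w̄ = w̄_T` because `P` is positive definite. Writing
`P S` as similar to `√P S √P`, the last term is `-½ ∑ᵢ (λᵢ - log λᵢ)` over the eigenvalues of
`√P S √P`, and `λ - log λ ≥ 1` with equality only at `λ = 1` makes it maximal exactly at
`S = P⁻¹`.
-/

namespace Matrix

variable {n : Type*} [Fintype n]

theorem IsHermitian.dotProduct_mulVec_comm {A : Matrix n n ℝ} (hA : A.IsHermitian) (x y : n → ℝ) :
    x ⬝ᵥ (A *ᵥ y) = y ⬝ᵥ (A *ᵥ x) := by
  rw [dotProduct_mulVec, dotProduct_comm, ← mulVec_transpose,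
    ← conjTranspose_eq_transpose_of_trivial, hA.eq]

theorem IsHermitian.dotProduct_mulVec_sub_sub {A : Matrix n n ℝ} (hA : A.IsHermitian)
    (x a : n → ℝ) :
    (x - a) ⬝ᵥ (A *ᵥ (x - a)) = x ⬝ᵥ (A *ᵥ x) - 2 * (x ⬝ᵥ (A *ᵥ a)) + a ⬝ᵥ (A *ᵥ a) := by
  rw [mulVec_sub, dotProduct_sub, sub_dotProduct, sub_dotProduct, hA.dotProduct_mulVec_comm a x]
  ring

theorem sum_sq_sub_dotProduct {ι : Type*} [Fintype ι] (y : ι → ℝ) (φ : ι → n → ℝ)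
    (w : n → ℝ) :
    ∑ t, (y t - w ⬝ᵥ φ t) ^ 2 = ∑ t, y t ^ 2 - 2 * (w ⬝ᵥ ∑ t, y t • φ t)
      + w ⬝ᵥ ((∑ t, vecMulVec (φ t) (φ t)) *ᵥ w) := by
  simp only [sum_mulVec, vecMulVec_mulVec, dotProduct_sum, dotProduct_smul, smul_eq_mul,
    Finset.mul_sum, ← Finset.sum_add_distrib, ← Finset.sum_sub_distrib]
  refine Finset.sum_congr rfl fun t _ => ?_
  simp only [op_smul_eq_smul, smul_eq_mul, dotProduct_comm (φ t) w]
  ring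

theorem trace_sum_vecMulVec_self_mul {ι : Type*} [Fintype ι] (φ : ι → n → ℝ)
    (S : Matrix n n ℝ) :
    ((∑ t, vecMulVec (φ t) (φ t)) * S).trace = ∑ t, φ t ⬝ᵥ (S *ᵥ φ t) := by
  simp only [Matrix.sum_mul, trace_sum, vecMulVec_mul, trace_vecMulVec]
  exact Finset.sum_congr rfl fun t _ => by rw [dotProduct_mulVec, dotProduct_comm]

variable [DecidableEq n]

theorem PosDef.trace_sub_log_det {A : Matrix n n ℝ} (hA : A.PosDef) :
    A.trace - Real.log A.det = ∑ i, (hA.1.eigenvalues i - Real.log (hA.1.eigenvalues i)) := by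
  rw [Finset.sum_sub_distrib, hA.1.trace_eq_sum_eigenvalues, hA.1.det_eq_prod_eigenvalues,
    ← Real.log_prod fun i _ => (hA.eigenvalues_pos i).ne']
  simp

theorem PosDef.card_le_trace_sub_log_det {A : Matrix n n ℝ} (hA : A.PosDef) :
    (Fintype.card n : ℝ) ≤ A.trace - Real.log A.det := by
  rw [hA.trace_sub_log_det, ← nsmul_one, ← Finset.card_univ, ← Finset.sum_const]
  gcongr with i
  linarith [Real.log_le_sub_one_of_pos (hA.eigenvalues_pos i)]

theorem IsHermitian.eq_one_of_eigenvalues_eq_one {A : Matrix n n ℝ} (hA : A.IsHermitian)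
    (h : ∀ i, hA.eigenvalues i = 1) : A = 1 := by
  have h1 : (RCLike.ofReal ∘ hA.eigenvalues : n → ℝ) = fun _ => 1 := funext fun i => by simp [h]
  rw [hA.spectral_theorem, h1, diagonal_one, map_one]

theorem PosDef.card_lt_trace_sub_log_det {A : Matrix n n ℝ} (hA : A.PosDef) (hA1 : A ≠ 1) :
    (Fintype.card n : ℝ) < A.trace - Real.log A.det := by
  obtain ⟨i, hi⟩ : ∃ i, hA.1.eigenvalues i ≠ 1 := by
    by_contra! h
    exact hA1 (hA.1.eq_one_of_eigenvalues_eq_one h)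
  rw [hA.trace_sub_log_det, ← nsmul_one, ← Finset.card_univ, ← Finset.sum_const]
  refine Finset.sum_lt_sum (fun j _ => ?_) ⟨i, Finset.mem_univ i, ?_⟩
  · linarith [Real.log_le_sub_one_of_pos (hA.eigenvalues_pos j)]
  · linarith [Real.log_lt_sub_one_of_pos (hA.eigenvalues_pos i) hi]

open scoped MatrixOrder in
theorem PosDef.card_le_trace_mul_sub_log_det_mul {P S : Matrix n n ℝ} (hP : P.PosDef)
    (hS : S.PosDef) :
    (Fintype.card n : ℝ) ≤ (P * S).trace - Real.log (P * S).det ∧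
      (S ≠ P⁻¹ → (Fintype.card n : ℝ) < (P * S).trace - Real.log (P * S).det) := by
  set R := CFC.sqrt P
  have hRR : R * R = P := CFC.sqrt_mul_sqrt_self P hP.posSemidef.nonneg
  have hR : IsUnit R := CFC.isUnit_sqrt_iff_isStrictlyPositive.mpr hP.isStrictlyPositive
  have hRstar : star R = R := (CFC.sqrt_nonneg P).isSelfAdjoint
  have hB : (R * S * R).PosDef := by
    simpa only [hRstar] using (IsUnit.posDef_star_right_conjugate_iff hR).mpr hS
  have htr : (P * S).trace = (R * S * R).trace := by
    rw [← hRR, Matrix.mul_assoc, trace_mul_cycle, Matrix.mul_assoc]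
  have hdet : (P * S).det = (R * S * R).det := by
    rw [← hRR]; simp only [det_mul]; ring
  rw [htr, hdet]
  refine ⟨hB.card_le_trace_sub_log_det, fun hSP => hB.card_lt_trace_sub_log_det fun h1 => hSP ?_⟩
  have hRinv : R * R⁻¹ = 1 := mul_nonsing_inv R ((isUnit_iff_isUnit_det R).mp hR)
  have hPS : P * S = 1 :=
    calc P * S = R * (R * S * R) * R⁻¹ := by simp only [← hRR, Matrix.mul_assoc, hRinv, mul_one]
      _ = 1 := by rw [h1, mul_one, hRinv]
  exact (inv_eq_right_inv hPS).symm

end Matrix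

theorem log_gaussPdf1 (y μ : ℝ) {s2 : ℝ} (hs2 : 0 < s2) :
    Real.log (gaussPdf1 y μ s2) = -(1 / 2) * Real.log (2 * π * s2) - (y - μ) ^ 2 / (2 * s2) := by
  have h2πs2 : 0 < 2 * π * s2 := by positivity
  rw [gaussPdf1, Real.log_mul (Real.rpow_pos_of_pos h2πs2 _).ne' (Real.exp_ne_zero _),
    Real.log_rpow h2πs2, Real.log_exp]
  ring

section Posterior

variable {m T : ℕ} (φ : Fin T → Fin m → ℝ) (y : Fin T → ℝ) {σ2 : ℝ} (w0 : Fin m → ℝ)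
  {S0 : Matrix (Fin m) (Fin m) ℝ}

theorem postPrec_posDef (hσ2 : 0 < σ2) (hS0 : S0.PosDef) : (postPrec φ σ2 S0).PosDef :=
  hS0.inv.add_posSemidef <| (posSemidef_sum _ fun t _ => by
    simpa using posSemidef_vecMulVec_self_star (φ t)).smul (inv_nonneg.mpr hσ2.le)

theorem postPrec_mul_postCov (hσ2 : 0 < σ2) (hS0 : S0.PosDef) :
    postPrec φ σ2 S0 * postCov φ σ2 S0 = 1 :=
  mul_nonsing_inv _ (postPrec_posDef φ hσ2 hS0).det_pos.ne'.isUnit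

theorem postPrec_mulVec_postMean (hσ2 : 0 < σ2) (hS0 : S0.PosDef) :
    postPrec φ σ2 S0 *ᵥ postMean φ y σ2 w0 S0 = S0⁻¹ *ᵥ w0 + σ2⁻¹ • ∑ t, y t • φ t := by
  rw [postMean, mulVec_mulVec, postPrec_mul_postCov φ hσ2 hS0, one_mulVec]

theorem exists_Lobj_eq (hσ2 : 0 < σ2) (hS0 : S0.PosDef) :
    ∃ c, ∀ (w : Fin m → ℝ) (S : Matrix (Fin m) (Fin m) ℝ), S.PosDef →
      Lobj φ y σ2 w0 S0 w S = c
        - 1 / 2 * ((w - postMean φ y σ2 w0 S0) ⬝ᵥ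
            (postPrec φ σ2 S0 *ᵥ (w - postMean φ y σ2 w0 S0)))
        - 1 / 2 * ((postPrec φ σ2 S0 * S).trace - Real.log (postPrec φ σ2 S0 * S).det) := by
  set P := postPrec φ σ2 S0 with hP_def
  set wT := postMean φ y σ2 w0 S0
  have hP : P.PosDef := postPrec_posDef φ hσ2 hS0
  refine ⟨T * (-(1 / 2) * Real.log (2 * π * σ2)) - (∑ t, y t ^ 2) / (2 * σ2)
    - 1 / 2 * (w0 ⬝ᵥ (S0⁻¹ *ᵥ w0)) + 1 / 2 * (wT ⬝ᵥ (P *ᵥ wT))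
    + m / 2 - 1 / 2 * Real.log S0.det - 1 / 2 * Real.log P.det, fun w S hS => ?_⟩
  have hlik : ∑ t, Real.log (gaussPdf1 (y t) (w ⬝ᵥ φ t) σ2)
      = T * (-(1 / 2) * Real.log (2 * π * σ2)) - (∑ t, (y t - w ⬝ᵥ φ t) ^ 2) / (2 * σ2) := by
    simp only [log_gaussPdf1 _ _ hσ2, Finset.sum_sub_distrib, Finset.sum_const,
      Finset.card_univ, Fintype.card_fin, nsmul_eq_mul, Finset.sum_div]
  have hprior : (w0 - w) ⬝ᵥ (S0⁻¹ *ᵥ (w0 - w))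
      = w ⬝ᵥ (S0⁻¹ *ᵥ w) - 2 * (w ⬝ᵥ (S0⁻¹ *ᵥ w0)) + w0 ⬝ᵥ (S0⁻¹ *ᵥ w0) := by
    rw [← hS0.inv.isHermitian.dotProduct_mulVec_sub_sub, ← neg_sub w, mulVec_neg, neg_dotProduct,
      dotProduct_neg, neg_neg]
  have hquad := hP.isHermitian.dotProduct_mulVec_sub_sub w wT
  have hPw : w ⬝ᵥ (P *ᵥ w)
      = w ⬝ᵥ (S0⁻¹ *ᵥ w) + σ2⁻¹ * (w ⬝ᵥ ((∑ t, vecMulVec (φ t) (φ t)) *ᵥ w)) := by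
    rw [hP_def, postPrec, add_mulVec, dotProduct_add, smul_mulVec, dotProduct_smul, smul_eq_mul]
  have hPwT : w ⬝ᵥ (P *ᵥ wT) = w ⬝ᵥ (S0⁻¹ *ᵥ w0) + σ2⁻¹ * (w ⬝ᵥ ∑ t, y t • φ t) := by
    rw [postPrec_mulVec_postMean φ y w0 hσ2 hS0, dotProduct_add, dotProduct_smul, smul_eq_mul]
  have htr : (P * S).trace = (S0⁻¹ * S).trace + σ2⁻¹ * ∑ t, φ t ⬝ᵥ (S *ᵥ φ t) := by
    rw [hP_def, postPrec, add_mul, trace_add, smul_mul, trace_smul, smul_eq_mul,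
      trace_sum_vecMulVec_self_mul]
  have hdet : Real.log (P * S).det = Real.log P.det + Real.log S.det := by
    rw [det_mul, Real.log_mul hP.det_pos.ne' hS.det_pos.ne']
  rw [Lobj, gaussKL, Finset.sum_sub_distrib, hlik, ← Finset.mul_sum, htr, hdet]
  linear_combination -(1 / (2 * σ2)) * sum_sq_sub_dotProduct y φ w - 1 / 2 * hprior
    + 1 / 2 * hquad + 1 / 2 * hPw - hPwT

end Posterior

theorem stmt0_general (m T : ℕ)
    (φ : Fin T → Fin m → ℝ) (y : Fin T → ℝ)
    (σ2 : ℝ) (hσ2 : 0 < σ2) (w0 : Fin m → ℝ)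
    (S0 : Matrix (Fin m) (Fin m) ℝ) (hS0 : S0.PosDef) :
    (postPrec φ σ2 S0).PosDef ∧ (postCov φ σ2 S0).PosDef ∧
      ∀ (wb : Fin m → ℝ) (S : Matrix (Fin m) (Fin m) ℝ), S.PosDef →
        (wb, S) ≠ (postMean φ y σ2 w0 S0, postCov φ σ2 S0) →
        Lobj φ y σ2 w0 S0 wb S
          < Lobj φ y σ2 w0 S0 (postMean φ y σ2 w0 S0) (postCov φ σ2 S0) := by
  have hP := postPrec_posDef φ hσ2 hS0
  have hC : (postCov φ σ2 S0).PosDef := hP.inv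
  refine ⟨hP, hC, fun wb S hS hne => ?_⟩
  obtain ⟨c, hc⟩ := exists_Lobj_eq φ y w0 hσ2 hS0
  rw [hc wb S hS, hc _ _ hC, postPrec_mul_postCov φ hσ2 hS0]
  simp only [sub_self, mulVec_zero, dotProduct_zero, trace_one, det_one, Real.log_one,
    Fintype.card_fin]
  obtain ⟨hle, hlt⟩ := hP.card_le_trace_mul_sub_log_det_mul hS
  rw [Fintype.card_fin] at hle hlt
  rcases eq_or_ne wb (postMean φ y σ2 w0 S0) with rfl | hw
  · have hSP : S ≠ (postPrec φ σ2 S0)⁻¹ := fun h => hne (by rw [h, postCov])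
    simp only [sub_self, mulVec_zero, dotProduct_zero]
    linarith [hlt hSP]
  · have hq := hP.dotProduct_mulVec_pos (sub_ne_zero.mpr hw)
    simp only [star_trivial] at hq
    linarith

/-- The maximizer of the variational lower bound equals the recursive least
squares posterior `(wb_T, S_T)`, and is unique. -/
theorem stmt0 (m T : ℕ) (hm : 1 ≤ m) (hT : 1 ≤ T)
    (φ : Fin T → Fin m → ℝ) (y : Fin T → ℝ)
    (σ2 : ℝ) (hσ2 : 0 < σ2) (w0 : Fin m → ℝ)
    (S0 : Matrix (Fin m) (Fin m) ℝ) (hS0 : S0.PosDef) :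
    (postPrec φ σ2 S0).PosDef ∧ (postCov φ σ2 S0).PosDef ∧
      ∀ (wb : Fin m → ℝ) (S : Matrix (Fin m) (Fin m) ℝ), S.PosDef →
        (wb, S) ≠ (postMean φ y σ2 w0 S0, postCov φ σ2 S0) →
        Lobj φ y σ2 w0 S0 wb S
          < Lobj φ y σ2 w0 S0 (postMean φ y σ2 w0 S0) (postCov φ σ2 S0) :=
  stmt0_general m T φ y σ2 hσ2 w0 S0 hS0
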